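/- Every finite metacyclic group with trivial centre admits a presentation ⟨a, b ; a^m = 1, b^n = 1, b⁻¹ab = a^k⟩ for some positive integers m, n, k with gcd(m, k-1) = 1 and n equal to the multiplicative order of k modulo m. -/

import Mathlib

/-- Relations for the presentation `⟨a, b ; a^m = 1, b^n = 1, b⁻¹ab = a^k⟩`. -/
def mcRels (m n k : ℕ) : Set (FreeGroup Bool) :=
  {FreeGroup.of true ^ m, FreeGroup.of false ^ n,
    (FreeGroup.of false)⁻¹ * FreeGroup.of true * FreeGroup.of false *
      (FreeGroup.of true ^ k)⁻¹}

/-- The metacyclic group `G(m,n,k) = ⟨a, b ; a^m = 1, b^n = 1, b⁻¹ab = a^k⟩`. -/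
def McGroup (m n k : ℕ) := PresentedGroup (mcRels m n k)

instance (m n k : ℕ) : Group (McGroup m n k) := by
  unfold McGroup; infer_instance

/-- `n = ind_m(k)`: `n` is the least positive integer with `k^n ≡ 1 (mod m)`. -/
def IsIndex (m k n : ℕ) : Prop :=
  0 < n ∧ k ^ n ≡ 1 [MOD m] ∧ ∀ d : ℕ, 0 < d → k ^ d ≡ 1 [MOD m] → n ≤ d

/-- A group is metacyclic if it has a cyclic normal subgroup with cyclic
quotient. -/
def IsMetacyclic (G : Type*) [Group G] : Prop :=
  ∃ N : Subgroup G, IsCyclic N ∧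
    ∃ hN : N.Normal,
      letI : Group (G ⧸ N) := @QuotientGroup.Quotient.group G _ N hN
      IsCyclic (G ⧸ N)


/-! Let `a` generate the cyclic normal subgroup and let `b` map to a generator of the quotient, so
`b⁻¹ a b = a ^ k`, `m = orderOf a` and `|G| = m n` with `n` the index of `⟨a⟩`. As the centre is
trivial, an element commuting with both `a` and `b` is `1`. Applied to `b ^ n ∈ ⟨a⟩` this gives
`b ^ n = 1`, so `orderOf b = n`; applied to `b ^ d`, which commutes with `a` exactly when
`k ^ d ≡ 1 (mod m)`, it shows that `n` is the order of `k` modulo `m`; applied to the element of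
order `gcd(m, k - 1)` in `⟨a⟩`, which `b` centralises, it gives `gcd(m, k - 1) = 1`. Finally `G` is
a quotient of `G(m, n, k)`, every element of which has the form `b ^ j a ^ i`, so
`|G(m, n, k)| ≤ m n = |G|` and the quotient map is an isomorphism. -/

theorem exists_pos_pow_eq_of_mem_zpowers {G : Type*} [Group G] [Finite G] {a x : G}
    (hx : x ∈ Subgroup.zpowers a) : ∃ k : ℕ, 0 < k ∧ x = a ^ k := by
  obtain ⟨k, rfl⟩ := mem_powers_iff_mem_zpowers.mpr hx
  exact ⟨k + orderOf a, by have := orderOf_pos a; omega,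
    by rw [pow_add, pow_orderOf_eq_one, mul_one]⟩

section GeneratedByPair

variable {H : Type*} [Group H] {a b : H} {k : ℕ}

theorem pow_mul_pow_eq_pow_mul_pow_of_conj (hconj : b⁻¹ * a * b = a ^ k) (s t : ℕ) :
    a ^ t * b ^ s = b ^ s * a ^ (t * k ^ s) := by
  have hb : SemiconjBy b (a ^ k) a := by
    rw [SemiconjBy, ← hconj]; group
  suffices SemiconjBy (b ^ s) (a ^ (t * k ^ s)) (a ^ t) from this.symm
  induction s with
  | zero => simp
  | succ s ih =>
    rw [pow_succ b]
    refine ih.mul_left ?_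
    have := hb.pow_right (t * k ^ s)
    rwa [← pow_mul, mul_comm k, mul_assoc, ← pow_succ] at this

theorem commute_pow_iff_modEq_of_conj (hconj : b⁻¹ * a * b = a ^ k) (d : ℕ) :
    Commute (b ^ d) a ↔ k ^ d ≡ 1 [MOD orderOf a] := by
  have h := pow_mul_pow_eq_pow_mul_pow_of_conj hconj d 1
  rw [pow_one, one_mul] at h
  rw [Commute, SemiconjBy, h, mul_right_inj, ← pow_eq_pow_iff_modEq, pow_one, eq_comm]

theorem surjective_pow_mul_pow_of_closure_pair (hgen : Subgroup.closure {a, b} = ⊤)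
    {m n : ℕ} (hm : 0 < m) (hn : 0 < n) (ha : a ^ m = 1) (hb : b ^ n = 1)
    (hconj : b⁻¹ * a * b = a ^ k) :
    Function.Surjective fun p : Fin n × Fin m => b ^ (p.1 : ℕ) * a ^ (p.2 : ℕ) := by
  have ha_inv : a⁻¹ = a ^ (m - 1) :=
    (eq_inv_of_mul_eq_one_left ((pow_sub_one_mul hm.ne' a).trans ha)).symm
  have hb_inv : b⁻¹ = b ^ (n - 1) :=
    (eq_inv_of_mul_eq_one_left ((pow_sub_one_mul hn.ne' b).trans hb)).symm
  have hswap := pow_mul_pow_eq_pow_mul_pow_of_conj hconj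
  have hswap_one (t : ℕ) : a ^ t * b = b * a ^ (t * k) := by simpa using hswap 1 t
  have hnf : ∀ g : H, ∃ i j : ℕ, b ^ j * a ^ i = g := by
    intro g
    have hg : g ∈ Subgroup.closure {a, b} := hgen ▸ Subgroup.mem_top g
    induction hg using Subgroup.closure_induction_right with
    | one => exact ⟨0, 0, by simp⟩
    | mul_right x _ y hy ih =>
      obtain ⟨i, j, rfl⟩ := ih
      rcases hy with rfl | rfl
      · exact ⟨i + 1, j, by rw [pow_succ, mul_assoc]⟩
      · refine ⟨i * k, j + 1, ?_⟩
        rw [mul_assoc, hswap_one, ← mul_assoc, ← pow_succ]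
    | mul_inv_cancel x _ y hy ih =>
      obtain ⟨i, j, rfl⟩ := ih
      rcases hy with rfl | rfl
      · exact ⟨i + (m - 1), j, by rw [ha_inv, pow_add, mul_assoc]⟩
      · refine ⟨i * k ^ (n - 1), j + (n - 1), ?_⟩
        rw [hb_inv, mul_assoc, hswap, ← mul_assoc, ← pow_add]
  intro g
  obtain ⟨i, j, rfl⟩ := hnf g
  exact ⟨(⟨j % n, Nat.mod_lt j hn⟩, ⟨i % m, Nat.mod_lt i hm⟩),
    by simp only [← pow_eq_pow_mod i ha, ← pow_eq_pow_mod j hb]⟩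

end GeneratedByPair

namespace McGroup

variable {m n k : ℕ}

def a : McGroup m n k := PresentedGroup.of true

def b : McGroup m n k := PresentedGroup.of false

theorem a_pow : (a : McGroup m n k) ^ m = 1 :=
  (map_pow _ _ _).symm.trans (PresentedGroup.one_of_mem (Set.mem_insert _ _))

theorem b_pow : (b : McGroup m n k) ^ n = 1 :=
  (map_pow _ _ _).symm.trans
    (PresentedGroup.one_of_mem (Set.mem_insert_of_mem _ (Set.mem_insert _ _)))

theorem b_inv_mul_a_mul_b : (b⁻¹ * a * b : McGroup m n k) = a ^ k := by
  have h := PresentedGroup.one_of_mem (rels := mcRels m n k)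
    (Set.mem_insert_of_mem _ (Set.mem_insert_of_mem _ rfl))
  simp only [map_mul, map_inv, map_pow] at h
  exact mul_inv_eq_one.mp h

theorem closure_a_b : Subgroup.closure {a, b} = (⊤ : Subgroup (McGroup m n k)) := by
  have h := PresentedGroup.closure_range_of (mcRels m n k)
  have hrange : Set.range (PresentedGroup.of (rels := mcRels m n k)) = {a, b} := by
    ext x
    simp only [Set.mem_range, Bool.exists_bool]
    exact or_comm.trans (or_congr eq_comm eq_comm)
  rw [hrange] at h
  exact h

variable {H : Type*} [Group H]

def lift (x y : H) (hx : x ^ m = 1) (hy : y ^ n = 1) (hxy : y⁻¹ * x * y = x ^ k) :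
    McGroup m n k →* H :=
  PresentedGroup.toGroup (f := fun i => cond i x y) <| by
    rintro r (rfl | rfl | rfl)
    · simpa using hx
    · simpa using hy
    · simpa using mul_inv_eq_one.mpr hxy

theorem lift_a {x y : H} (hx : x ^ m = 1) (hy : y ^ n = 1) (hxy : y⁻¹ * x * y = x ^ k) :
    lift x y hx hy hxy a = x :=
  PresentedGroup.toGroup.of _

theorem lift_b {x y : H} (hx : x ^ m = 1) (hy : y ^ n = 1) (hxy : y⁻¹ * x * y = x ^ k) :
    lift x y hx hy hxy b = y :=
  PresentedGroup.toGroup.of _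

end McGroup

theorem nonempty_mulEquiv_mcGroup {H : Type*} [Group H] [Finite H] {a b : H} {m n k : ℕ}
    (hgen : Subgroup.closure {a, b} = ⊤) (ha : a ^ m = 1) (hb : b ^ n = 1)
    (hconj : b⁻¹ * a * b = a ^ k) (hcard : Nat.card H = m * n) :
    Nonempty (H ≃* McGroup m n k) := by
  have hmn : 0 < m * n := hcard ▸ Nat.card_pos
  have hm : 0 < m := Nat.pos_of_mul_pos_right hmn
  have hn : 0 < n := Nat.pos_of_mul_pos_left hmn
  set φ := McGroup.lift a b ha hb hconj
  have hφ : Function.Surjective φ := by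
    rw [← MonoidHom.range_eq_top, eq_top_iff, ← hgen, Subgroup.closure_le]
    rintro x (rfl | rfl)
    · exact ⟨McGroup.a, McGroup.lift_a ha hb hconj⟩
    · exact ⟨McGroup.b, McGroup.lift_b ha hb hconj⟩
  have hnf := surjective_pow_mul_pow_of_closure_pair McGroup.closure_a_b hm hn
    McGroup.a_pow McGroup.b_pow (McGroup.b_inv_mul_a_mul_b (k := k))
  have : Finite (McGroup m n k) := Finite.of_surjective _ hnf
  have hle : Nat.card (McGroup m n k) ≤ Nat.card H := by
    simpa [hcard, mul_comm] using Nat.card_le_card_of_surjective _ hnf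
  have hbij : Function.Bijective φ := (Nat.bijective_iff_surjective_and_card φ).mpr
    ⟨hφ, le_antisymm hle (Nat.card_le_card_of_surjective φ hφ)⟩
  exact ⟨(MulEquiv.ofBijective φ hbij).symm⟩

theorem IsMetacyclic.exists_generators {G : Type*} [Group G] [Finite G] (hmc : IsMetacyclic G) :
    ∃ a b : G, (Subgroup.zpowers a).Normal ∧ Subgroup.closure {a, b} = ⊤ ∧
      (Subgroup.zpowers a).index ∣ orderOf b := by
  obtain ⟨N, hNcyc, hN, hQcyc⟩ := hmc
  obtain ⟨a, rfl⟩ := (Subgroup.isCyclic_iff_exists_zpowers_eq_top N).mp hNcyc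
  obtain ⟨q, hq⟩ := hQcyc.exists_generator
  obtain ⟨b, rfl⟩ := QuotientGroup.mk_surjective q
  refine ⟨a, b, hN, ?_, ?_⟩
  · have hmap : (Subgroup.closure {a, b}).map (QuotientGroup.mk' (Subgroup.zpowers a)) = ⊤ := by
      refine eq_top_iff.mpr fun x _ => Subgroup.zpowers_le.mpr ?_ (hq x)
      exact Subgroup.mem_map_of_mem _ (Subgroup.subset_closure (Set.mem_insert_of_mem _ rfl))
    have hle : Subgroup.zpowers a ≤ Subgroup.closure {a, b} :=
      Subgroup.zpowers_le.mpr (Subgroup.subset_closure (Set.mem_insert _ _))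
    rw [← sup_eq_left.mpr hle, ← QuotientGroup.ker_mk' (Subgroup.zpowers a),
      ← Subgroup.comap_map_eq, hmap, Subgroup.comap_top]
  · rw [Subgroup.index, ← orderOf_eq_card_of_forall_mem_zpowers hq]
    exact orderOf_map_dvd (QuotientGroup.mk' _) b

section TrivialCenter

variable {G : Type*} [Group G] {a b : G} {k : ℕ}

theorem eq_one_of_commute_of_closure_pair (hgen : Subgroup.closure {a, b} = ⊤)
    (hz : Subgroup.center G = ⊥) {z : G} (ha : Commute z a) (hb : Commute z b) : z = 1 := by
  have hmem : z ∈ Subgroup.center G := by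
    simp [Subgroup.center_eq_iInf hgen, Subgroup.mem_centralizer_singleton_iff, ha.eq, hb.eq]
  simpa [hz] using hmem

theorem pow_index_zpowers_eq_one (hgen : Subgroup.closure {a, b} = ⊤)
    (hz : Subgroup.center G = ⊥) [(Subgroup.zpowers a).Normal] :
    b ^ (Subgroup.zpowers a).index = 1 := by
  obtain ⟨t, ht⟩ := Subgroup.mem_zpowers_iff.mp ((Subgroup.zpowers a).pow_index_mem b)
  refine eq_one_of_commute_of_closure_pair hgen hz ?_ (Commute.self_pow b _).symm
  rw [← ht]
  exact (Commute.refl a).zpow_left t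

theorem coprime_orderOf_sub_one_of_conj (hgen : Subgroup.closure {a, b} = ⊤)
    (hz : Subgroup.center G = ⊥) [Finite G] (hconj : b⁻¹ * a * b = a ^ k) (hk : 0 < k) :
    Nat.Coprime (orderOf a) (k - 1) := by
  set d := Nat.gcd (orderOf a) (k - 1)
  set z := a ^ (orderOf a / d)
  have hz_order : orderOf z = d :=
    orderOf_pow_orderOf_div (orderOf_pos a).ne' (Nat.gcd_dvd_left _ _)
  have hzk : z ^ k = z := by
    rw [← Nat.sub_add_cancel hk, pow_succ, orderOf_dvd_iff_pow_eq_one.mp, one_mul]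
    exact hz_order ▸ Nat.gcd_dvd_right _ _
  have hzb : Commute z b := by
    have h := pow_mul_pow_eq_pow_mul_pow_of_conj hconj 1 (orderOf a / d)
    rwa [pow_one, pow_one, pow_mul, hzk] at h
  have hz_one := eq_one_of_commute_of_closure_pair hgen hz ((Commute.refl a).pow_left _) hzb
  change d = 1
  rw [← hz_order, show z = 1 from hz_one, orderOf_one]

theorem isIndex_orderOf_of_conj (hgen : Subgroup.closure {a, b} = ⊤)
    (hz : Subgroup.center G = ⊥) [Finite G] (hconj : b⁻¹ * a * b = a ^ k) :
    IsIndex (orderOf a) k (orderOf b) := by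
  refine ⟨orderOf_pos b, ?_, fun d hd hkd => ?_⟩
  · rw [← commute_pow_iff_modEq_of_conj hconj, pow_orderOf_eq_one]
    exact Commute.one_left a
  · have hbd := eq_one_of_commute_of_closure_pair hgen hz
      ((commute_pow_iff_modEq_of_conj hconj d).mpr hkd) (Commute.self_pow b d).symm
    exact Nat.le_of_dvd hd (orderOf_dvd_of_pow_eq_one hbd)

end TrivialCenter

/-- every finite metacyclic group with trivial centre can be
presented as `⟨a, b ; a^m = 1, b^n = 1, b⁻¹ab = a^k⟩` with `gcd(m, k-1) = 1`
and `n = ind_m(k)`. -/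
theorem stmt_3 (G : Type*) [Group G] [Finite G]
    (hmc : IsMetacyclic G) (hz : Subgroup.center G = ⊥) :
    ∃ m n k : ℕ, 0 < m ∧ 0 < n ∧ 0 < k ∧ Nat.gcd m (k - 1) = 1 ∧
      IsIndex m k n ∧ Nonempty (G ≃* McGroup m n k) := by
  obtain ⟨a, b, hnormal, hgen, hindex_dvd⟩ := hmc.exists_generators
  have hmem : b⁻¹ * a * b ∈ Subgroup.zpowers a := by
    simpa using hnormal.conj_mem a (Subgroup.mem_zpowers a) b⁻¹
  obtain ⟨k, hk, hconj⟩ := exists_pos_pow_eq_of_mem_zpowers hmem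
  have hb : orderOf b = (Subgroup.zpowers a).index :=
    Nat.dvd_antisymm (orderOf_dvd_of_pow_eq_one (pow_index_zpowers_eq_one hgen hz)) hindex_dvd
  have hcard : Nat.card G = orderOf a * orderOf b := by
    rw [hb, ← Nat.card_zpowers, Subgroup.card_mul_index]
  exact ⟨orderOf a, orderOf b, k, orderOf_pos a, orderOf_pos b, hk,
    coprime_orderOf_sub_one_of_conj hgen hz hconj hk, isIndex_orderOf_of_conj hgen hz hconj,
    nonempty_mulEquiv_mcGroup hgen (pow_orderOf_eq_one a) (pow_orderOf_eq_one b) hconj hcard⟩
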